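/- Parameter-shift rule: Let P be a Hermitian involution (P² = I) on a finite-dimensional Hilbert space, and define L(θ) = Tr(Ξ · e^{−iθP/2} ζ e^{iθP/2}) for fixed Hermitian Ξ and positive semidefinite ζ. Then dL/dθ = (1/2)[L(θ + π/2) − L(θ − π/2)]. -/
import Mathlib


open Matrix
open scoped ComplexOrder

/-- `B θ = e^{−iθP/2} = cos(θ/2)·I − i sin(θ/2)·P`, for `P` with `P² = I`. -/
noncomputable def shiftGate {ι : Type*} [Fintype ι] [DecidableEq ι]
    (P : Matrix ι ι ℂ) (θ : ℝ) : Matrix ι ι ℂ :=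
  (Real.cos (θ/2) : ℂ) • (1 : Matrix ι ι ℂ)
    - (Complex.I * (Real.sin (θ/2) : ℂ)) • P

/-- The loss as an explicit trigonometric polynomial in `θ`. -/
lemma loss_eq {ι : Type*} [Fintype ι] [DecidableEq ι]
    (P Ξ ζ : Matrix ι ι ℂ) (θ : ℝ) :
    (Ξ * shiftGate P θ * ζ * shiftGate P (-θ)).trace =
      ((Ξ * ζ).trace + (Ξ * P * ζ * P).trace)/2
      + (Real.cos θ : ℂ) * (((Ξ * ζ).trace - (Ξ * P * ζ * P).trace)/2)
      + (Real.sin θ : ℂ) * (Complex.I * ((Ξ * ζ * P).trace - (Ξ * P * ζ).trace)/2) := by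
  have h1 : Complex.cos θ = 2*(Complex.cos ((θ:ℂ)/2))^2 - 1 := by
    rw [show (θ:ℂ) = 2*((θ:ℂ)/2) by ring, Complex.cos_two_mul]; ring_nf
  have h2 : Complex.sin θ = 2*Complex.sin ((θ:ℂ)/2)*Complex.cos ((θ:ℂ)/2) := by
    rw [show (θ:ℂ) = 2*((θ:ℂ)/2) by ring, Complex.sin_two_mul]; ring_nf
  have h3 : (Complex.sin ((θ:ℂ)/2))^2 = 1 - (Complex.cos ((θ:ℂ)/2))^2 := by
    rw [← Complex.sin_sq_add_cos_sq ((θ:ℂ)/2)]; ring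
  simp only [shiftGate, neg_div, Real.cos_neg, Real.sin_neg]
  push_cast
  simp only [Matrix.mul_sub, Matrix.sub_mul, Matrix.mul_add, Matrix.add_mul,
    Matrix.mul_smul, Matrix.smul_mul, Matrix.mul_one, Matrix.one_mul, smul_smul,
    neg_smul, smul_neg, sub_neg_eq_add,
    trace_add, trace_sub, trace_smul, trace_neg, smul_eq_mul]
  rw [h1, h2]
  linear_combination (-(Complex.sin ((θ:ℂ)/2))^2 * (Ξ * P * ζ * P).trace) * Complex.I_sq
    + (Ξ * P * ζ * P).trace * h3

/-- Parameter-shift rule: for a Hermitian involution `P` (`P² = I`), Hermitian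
`Ξ` and positive semidefinite `ζ`, the loss `L(θ) = Tr(Ξ e^{−iθP/2} ζ e^{iθP/2})`
satisfies `dL/dθ = (1/2)(L(θ + π/2) − L(θ − π/2))`. -/
theorem parameter_shift_rule {ι : Type*} [Fintype ι] [DecidableEq ι]
    (P Ξ ζ : Matrix ι ι ℂ) (hP : P.IsHermitian) (hP2 : P * P = 1)
    (hΞ : Ξ.IsHermitian) (hζ : ζ.PosSemidef) (θ : ℝ) :
    HasDerivAt (fun θ : ℝ => (Ξ * shiftGate P θ * ζ * shiftGate P (-θ)).trace)
      ((1/2 : ℂ) * ((Ξ * shiftGate P (θ + Real.pi/2) * ζ * shiftGate P (-(θ + Real.pi/2))).trace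
        - (Ξ * shiftGate P (θ - Real.pi/2) * ζ * shiftGate P (-(θ - Real.pi/2))).trace))
      θ := by
  set A : ℂ := ((Ξ * ζ).trace + (Ξ * P * ζ * P).trace)/2 with hA
  set B : ℂ := ((Ξ * ζ).trace - (Ξ * P * ζ * P).trace)/2 with hB
  set C : ℂ := Complex.I * ((Ξ * ζ * P).trace - (Ξ * P * ζ).trace)/2 with hC
  have key : ∀ x : ℝ, (Ξ * shiftGate P x * ζ * shiftGate P (-x)).trace
      = A + (Real.cos x : ℂ) * B + (Real.sin x : ℂ) * C := fun x => loss_eq P Ξ ζ x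
  have hcos : HasDerivAt (fun x : ℝ => ((Real.cos x : ℂ))) (-Real.sin θ : ℂ) θ := by
    simpa using (Real.hasDerivAt_cos θ).ofReal_comp
  have hsin : HasDerivAt (fun x : ℝ => ((Real.sin x : ℂ))) (Real.cos θ : ℂ) θ := by
    simpa using (Real.hasDerivAt_sin θ).ofReal_comp
  have hd : HasDerivAt (fun x : ℝ => A + (Real.cos x : ℂ) * B + (Real.sin x : ℂ) * C)
      ((-Real.sin θ : ℂ) * B + (Real.cos θ : ℂ) * C) θ :=
    ((hcos.mul_const B).const_add A).add (hsin.mul_const C)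
  have heq : ((1/2 : ℂ) * ((Ξ * shiftGate P (θ + Real.pi/2) * ζ * shiftGate P (-(θ + Real.pi/2))).trace
        - (Ξ * shiftGate P (θ - Real.pi/2) * ζ * shiftGate P (-(θ - Real.pi/2))).trace))
      = ((-Real.sin θ : ℂ) * B + (Real.cos θ : ℂ) * C) := by
    rw [key, key]
    push_cast [Real.cos_add, Real.sin_add, Real.cos_sub, Real.sin_sub,
      Real.cos_pi_div_two, Real.sin_pi_div_two]
    ring
  rw [heq]
  have : (fun θ : ℝ => (Ξ * shiftGate P θ * ζ * shiftGate P (-θ)).trace)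
      = fun x : ℝ => A + (Real.cos x : ℂ) * B + (Real.sin x : ℂ) * C := funext key
  rw [this]
  exact hd
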